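/- Consider the path graphical game on players U_{−1}, V_{−1}, U_0, V_0, U_1, V_1, …, U_{k−1}, V_{k−1}, U_k described in the context, with parameters x', x'' and A_1, …, A_{k−1}. In every Nash equilibrium of this game: v_{−1} = v_0 = v_1 = ⋯ = v_{k−1} = 1/2, u_0 = (x''−x')u_{−1} + x' (hence u_0 ∈ [x', x'']), u_1 = u_0/(u_0+1), and u_{i+1} = 1/(2 − u_i) for i = 1, …, k−1. -/

import Mathlib

/-!
Each `Vᵢ` is paired with `U_{i+1}`, who wants to mismatch it: this is matching pennies, so
`Vᵢ` must mix with probability `1/2` as soon as its own gain from playing `1` (which depends on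
`u_{i+1}`) is negative at `u_{i+1} = 0` and positive at `u_{i+1} = 1`. Mixing makes `Vᵢ`
indifferent, i.e. its gain vanishes, and that equation is the claimed formula for `u_{i+1}`.
For `i ≥ 1` the sign condition at `u_{i+1} = 1` needs `uᵢ < 1`, which propagates along the path
since `1 / (2 - uᵢ) < 1`.
-/

noncomputable section

/-- Nash equilibrium condition for the graphical game on the path
`U₋₁ V₋₁ U₀ V₀ U₁ V₁ … U_{k−1} V_{k−1} U_k`.
Here `um`, `vm` are the strategies of `U₋₁` and `V₋₁`, while `u i` (`0 ≤ i ≤ k`)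
and `v i` (`0 ≤ i ≤ k−1`) are the strategies of `Uᵢ` and `Vᵢ`.
The payoffs are:
* `U₋₁` gets payoff identically `0` (its Nash conditions are vacuous);
* `V₋₁` gets expected payoff `0` for action 0, `u 0 − (x''−x')·um − x'` for action 1;
* `V₀` gets `0` for action 0 and `u 1·(u 0 + 1) − u 0` for action 1;
* for `1 ≤ i ≤ k−1`, `Vᵢ` gets `Aᵢ uᵢ u_{i+1} − Aᵢ u_{i+1}` for action 0 and that
  plus `u_{i+1}·(2 − uᵢ) − 1` for action 1;
* for `0 ≤ i ≤ k`, `Uᵢ` gets `1` iff its action differs from that of `V_{i−1}`,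
  so its expected payoffs are `v_{i−1}` for action 0 and `1 − v_{i−1}` for action 1
  (with `V_{−1}`'s strategy `vm` when `i = 0`). -/
def IsNashPath (k : ℕ) (x' x'' : ℚ) (A : ℕ → ℝ)
    (um vm : ℝ) (u v : ℕ → ℝ) : Prop :=
  um ∈ Set.Icc (0:ℝ) 1 ∧ vm ∈ Set.Icc (0:ℝ) 1 ∧
  (∀ i ≤ k, u i ∈ Set.Icc (0:ℝ) 1) ∧
  (∀ i ≤ k - 1, v i ∈ Set.Icc (0:ℝ) 1) ∧
  (0 < vm → 0 ≤ u 0 - ((x'':ℝ) - (x':ℝ)) * um - (x':ℝ)) ∧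
  (vm < 1 → u 0 - ((x'':ℝ) - (x':ℝ)) * um - (x':ℝ) ≤ 0) ∧
  (0 < v 0 → 0 ≤ u 1 * (u 0 + 1) - u 0) ∧
  (v 0 < 1 → u 1 * (u 0 + 1) - u 0 ≤ 0) ∧
  (∀ i, 1 ≤ i → i ≤ k - 1 →
    (0 < v i → A i * u i * u (i+1) - A i * u (i+1) ≤
        A i * u i * u (i+1) - A i * u (i+1) + u (i+1) * (2 - u i) - 1) ∧
    (v i < 1 → A i * u i * u (i+1) - A i * u (i+1) + u (i+1) * (2 - u i) - 1 ≤
        A i * u i * u (i+1) - A i * u (i+1))) ∧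
  (∀ i ≤ k,
    (0 < u i → (if i = 0 then vm else v (i-1)) ≤ 1 - (if i = 0 then vm else v (i-1))) ∧
    (u i < 1 → 1 - (if i = 0 then vm else v (i-1)) ≤ (if i = 0 then vm else v (i-1))))

open Set

/-- `p` is the probability of action `1`, and `gain` is the payoff of action `1` minus that of
action `0`. -/
def IsBestResponse (p gain : ℝ) : Prop :=
  (0 < p → 0 ≤ gain) ∧ (p < 1 → gain ≤ 0)

lemma isBestResponse_sub_iff {p a b : ℝ} :
    ((0 < p → a ≤ b) ∧ (p < 1 → b ≤ a)) ↔ IsBestResponse p (b - a) := by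
  simp only [IsBestResponse, sub_nonneg, sub_nonpos]

lemma IsBestResponse.gain_eq_zero {p g : ℝ} (h : IsBestResponse p g) (h0 : 0 < p) (h1 : p < 1) :
    g = 0 :=
  le_antisymm (h.2 h1) (h.1 h0)

lemma IsBestResponse.eq_half_of_mismatch {u v g : ℝ} (hu : u ∈ Icc (0 : ℝ) 1)
    (hU : IsBestResponse u ((1 - v) - v)) (hV : IsBestResponse v g)
    (hg0 : u = 0 → g < 0) (hg1 : u = 1 → 0 < g) : v = 1 / 2 := by
  rcases lt_trichotomy v (1 / 2) with hlt | heq | hgt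
  · have hu1 : u = 1 := by
      by_contra hne
      linarith [hU.2 (lt_of_le_of_ne hu.2 hne)]
    linarith [hV.2 (by linarith), hg1 hu1]
  · exact heq
  · have hu0 : u = 0 := by
      by_contra hne
      linarith [hU.1 (lt_of_le_of_ne hu.1 (Ne.symm hne))]
    linarith [hV.1 (by linarith), hg0 hu0]

lemma one_div_two_sub_lt_one {x : ℝ} (hx : x < 1) : 1 / (2 - x) < 1 := by
  rw [div_lt_one (by linarith)]
  linarith

namespace IsNashPath

variable {k : ℕ} {x' x'' : ℚ} {A : ℕ → ℝ} {um vm : ℝ} {u v : ℕ → ℝ}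

lemma u_mem (hN : IsNashPath k x' x'' A um vm u v) {i : ℕ} (hi : i ≤ k) : u i ∈ Icc (0 : ℝ) 1 :=
  hN.2.2.1 i hi

lemma bestResponse_U_zero (hN : IsNashPath k x' x'' A um vm u v) :
    IsBestResponse (u 0) ((1 - vm) - vm) := by
  simpa using isBestResponse_sub_iff.mp (hN.2.2.2.2.2.2.2.2.2 0 (Nat.zero_le k))

lemma bestResponse_U_succ (hN : IsNashPath k x' x'' A um vm u v) {i : ℕ} (hi : i + 1 ≤ k) :
    IsBestResponse (u (i + 1)) ((1 - v i) - v i) := by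
  simpa using isBestResponse_sub_iff.mp (hN.2.2.2.2.2.2.2.2.2 (i + 1) hi)

lemma bestResponse_Vm (hN : IsNashPath k x' x'' A um vm u v) :
    IsBestResponse vm (u 0 - ((x'' : ℝ) - x') * um - x') :=
  ⟨hN.2.2.2.2.1, hN.2.2.2.2.2.1⟩

lemma bestResponse_V_zero (hN : IsNashPath k x' x'' A um vm u v) :
    IsBestResponse (v 0) (u 1 * (u 0 + 1) - u 0) :=
  ⟨hN.2.2.2.2.2.2.1, hN.2.2.2.2.2.2.2.1⟩

lemma bestResponse_V (hN : IsNashPath k x' x'' A um vm u v) {i : ℕ} (h1 : 1 ≤ i)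
    (hi : i ≤ k - 1) : IsBestResponse (v i) (u (i + 1) * (2 - u i) - 1) := by
  have h := isBestResponse_sub_iff.mp (hN.2.2.2.2.2.2.2.2.1 i h1 hi)
  rwa [add_sub_assoc, add_sub_cancel_left] at h

lemma vm_eq_half (hN : IsNashPath k x' x'' A um vm u v) (hx1 : 0 < x') (hx2 : x' < x'')
    (hx3 : x'' < 1) : vm = 1 / 2 := by
  have hx1' : (0 : ℝ) < x' := by exact_mod_cast hx1
  have hx2' : (x' : ℝ) < x'' := by exact_mod_cast hx2
  have hx3' : (x'' : ℝ) < 1 := by exact_mod_cast hx3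
  obtain ⟨hum0, hum1⟩ := hN.1
  refine hN.bestResponse_U_zero.eq_half_of_mismatch (hN.u_mem (Nat.zero_le k))
    hN.bestResponse_Vm (fun h ↦ ?_) (fun h ↦ ?_)
  · rw [h]; nlinarith
  · rw [h]; nlinarith

lemma v_zero_eq_half (hN : IsNashPath k x' x'' A um vm u v) (hk : 1 ≤ k) (hu0 : 0 < u 0) :
    v 0 = 1 / 2 :=
  (hN.bestResponse_U_succ hk).eq_half_of_mismatch (hN.u_mem hk) hN.bestResponse_V_zero
    (fun h ↦ by rw [h]; linarith) (fun h ↦ by rw [h]; linarith)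

lemma v_eq_half_and_succ (hN : IsNashPath k x' x'' A um vm u v) {i : ℕ} (h1 : 1 ≤ i)
    (hi : i ≤ k - 1) (hui : u i < 1) : v i = 1 / 2 ∧ u (i + 1) = 1 / (2 - u i) := by
  have hik : i + 1 ≤ k := by omega
  have hvi : v i = 1 / 2 :=
    (hN.bestResponse_U_succ hik).eq_half_of_mismatch (hN.u_mem hik) (hN.bestResponse_V h1 hi)
      (fun h ↦ by rw [h]; linarith) (fun h ↦ by rw [h]; linarith)
  have hgain := (hN.bestResponse_V h1 hi).gain_eq_zero (by rw [hvi]; norm_num)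
    (by rw [hvi]; norm_num)
  refine ⟨hvi, ?_⟩
  rw [eq_div_iff (by linarith)]
  linarith

lemma u_lt_one (hN : IsNashPath k x' x'' A um vm u v) (hu1 : u 1 < 1) :
    ∀ i, 1 ≤ i → i ≤ k → u i < 1 := by
  intro i h1
  induction i, h1 using Nat.le_induction with
  | base => exact fun _ ↦ hu1
  | succ i h1 ih =>
    intro hi
    rw [(hN.v_eq_half_and_succ h1 (by omega) (ih (by omega))).2]
    exact one_div_two_sub_lt_one (ih (by omega))

end IsNashPath

theorem nash_structure_path (k : ℕ) (hk : 2 ≤ k) (x' x'' : ℚ)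
    (hx1 : 0 < x') (hx2 : x' < x'') (hx3 : x'' < 1)
    (A : ℕ → ℝ) (um vm : ℝ) (u v : ℕ → ℝ)
    (hN : IsNashPath k x' x'' A um vm u v) :
    vm = 1/2 ∧ (∀ i ≤ k - 1, v i = 1/2) ∧
    u 0 = ((x'':ℝ) - (x':ℝ)) * um + (x':ℝ) ∧
    u 0 ∈ Set.Icc (x' : ℝ) (x'' : ℝ) ∧
    u 1 = u 0 / (u 0 + 1) ∧
    (∀ i, 1 ≤ i → i ≤ k - 1 → u (i + 1) = 1 / (2 - u i)) := by
  have hx2' : (x' : ℝ) < x'' := by exact_mod_cast hx2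
  obtain ⟨hum0, hum1⟩ := hN.1
  have hvm := hN.vm_eq_half hx1 hx2 hx3
  have hu0 : u 0 = ((x'' : ℝ) - x') * um + x' := by
    linarith [hN.bestResponse_Vm.gain_eq_zero (by rw [hvm]; norm_num) (by rw [hvm]; norm_num)]
  have hu0_mem : u 0 ∈ Icc (x' : ℝ) x'' := ⟨by nlinarith, by nlinarith⟩
  have hu0_pos : 0 < u 0 := lt_of_lt_of_le (by exact_mod_cast hx1) hu0_mem.1
  have hv0 := hN.v_zero_eq_half (by omega) hu0_pos
  have hu1 : u 1 = u 0 / (u 0 + 1) := by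
    have hgain := hN.bestResponse_V_zero.gain_eq_zero (by rw [hv0]; norm_num)
      (by rw [hv0]; norm_num)
    rw [eq_div_iff (by linarith)]
    linarith
  have hu1_lt : u 1 < 1 := by
    rw [hu1, div_lt_one (by linarith)]
    linarith
  have hstep : ∀ i, 1 ≤ i → i ≤ k - 1 → v i = 1 / 2 ∧ u (i + 1) = 1 / (2 - u i) :=
    fun i h1 hi ↦ hN.v_eq_half_and_succ h1 hi (hN.u_lt_one hu1_lt i h1 (by omega))
  refine ⟨hvm, fun i hi ↦ ?_, hu0, hu0_mem, hu1, fun i h1 hi ↦ (hstep i h1 hi).2⟩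
  rcases Nat.eq_zero_or_pos i with rfl | hpos
  · exact hv0
  · exact (hstep i hpos hi).1
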